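/- Consider the sequence q(ℓ+1) = max{-G(ℓ+1), q(ℓ) + G(ℓ+1)} (componentwise) with q(0) = max{-G(0), 0}, where G(ℓ) ∈ ℝ^p. Then for all ℓ ≥ 0, ⟨q(ℓ), G(ℓ+1)⟩ ≥ (1/2)(‖q(ℓ+1)‖² - ‖q(ℓ)‖²) - ‖G(ℓ+1)‖². -/

import Mathlib

open scoped RealInnerProductSpace

/-! Each coordinate satisfies `max (-b) (a + b) ^ 2 ≤ (a + b) ^ 2 + b ^ 2`; summing gives
`‖q (ℓ + 1)‖² ≤ ‖q ℓ + G (ℓ + 1)‖² + ‖G (ℓ + 1)‖²`, and expanding the first square on the right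
is the claimed inequality. -/

lemma sq_max_le_sq_add_sq (u v : ℝ) : max u v ^ 2 ≤ u ^ 2 + v ^ 2 := by
  rcases max_choice u v with h | h <;> rw [h] <;> linarith [sq_nonneg u, sq_nonneg v]

lemma EuclideanSpace.norm_sq_le_of_apply_eq_max_neg {ι : Type*} [Fintype ι]
    (x y z : EuclideanSpace ℝ ι) (hz : ∀ i, z i = max (-y i) (x i + y i)) :
    ‖z‖ ^ 2 ≤ ‖x + y‖ ^ 2 + ‖y‖ ^ 2 := by
  simp only [EuclideanSpace.real_norm_sq_eq, PiLp.add_apply, ← Finset.sum_add_distrib]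
  refine Finset.sum_le_sum fun i _ => ?_
  have h := sq_max_le_sq_add_sq (-y i) (x i + y i)
  rw [neg_sq] at h
  rw [hz i]
  linarith

theorem stmt_5_general {p : ℕ} (q G : ℕ → EuclideanSpace ℝ (Fin p))
    (hrec : ∀ ℓ i, q (ℓ + 1) i = max (-(G (ℓ + 1) i)) (q ℓ i + G (ℓ + 1) i)) :
    ∀ ℓ : ℕ,
      ⟪q ℓ, G (ℓ + 1)⟫ ≥
        (1 / 2) * (‖q (ℓ + 1)‖ ^ 2 - ‖q ℓ‖ ^ 2) - ‖G (ℓ + 1)‖ ^ 2 := by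
  intro ℓ
  have h := EuclideanSpace.norm_sq_le_of_apply_eq_max_neg (q ℓ) (G (ℓ + 1)) (q (ℓ + 1)) (hrec ℓ)
  rw [norm_add_sq_real] at h
  linarith

/-- Virtual queue successive inequality:
`⟨q(ℓ), G(ℓ+1)⟩ ≥ (1/2)(‖q(ℓ+1)‖² - ‖q(ℓ)‖²) - ‖G(ℓ+1)‖²`. -/
theorem stmt_5 {p : ℕ} (q G : ℕ → EuclideanSpace ℝ (Fin p))
    (h0 : ∀ i, q 0 i = max (-(G 0 i)) 0)
    (hrec : ∀ ℓ i, q (ℓ + 1) i = max (-(G (ℓ + 1) i)) (q ℓ i + G (ℓ + 1) i)) :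
    ∀ ℓ : ℕ,
      ⟪q ℓ, G (ℓ + 1)⟫ ≥
        (1 / 2) * (‖q (ℓ + 1)‖ ^ 2 - ‖q ℓ‖ ^ 2) - ‖G (ℓ + 1)‖ ^ 2 :=
  stmt_5_general q G hrec
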